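/- Let σ : ℝ → ℝ be L-Lipschitz and applied componentwise, let A be an N × N real matrix with operator norm ‖A‖ satisfying L·‖A‖ < 1, and let W_in be an N × d matrix, ζ ∈ ℝ^N. Then for every bi-infinite input sequence (z_t)_{t ∈ ℤ} in ℝ^d there exists a unique bounded sequence (r_t)_{t ∈ ℤ} in ℝ^N satisfying r_t = σ(A r_{t-1} + W_in z_t + ζ) for all t ∈ ℤ, provided σ has bounded image. -/
import Mathlib


/-- Echo state property: if `σ` is `L`-Lipschitz with bounded image, applied componentwise,
and `L‖A‖ < 1`, then for every bi-infinite input sequence `z` there is a unique bounded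
sequence `r` satisfying the reservoir recurrence `r_t = σ(A r_{t-1} + W_in z_t + ζ)`. -/
theorem echo_state_property {N d : ℕ} (σ : ℝ → ℝ) (L : NNReal) (hσ : LipschitzWith L σ)
    (hσbdd : ∃ M, ∀ x, |σ x| ≤ M)
    (A : (Fin N → ℝ) →L[ℝ] (Fin N → ℝ)) (Win : (Fin d → ℝ) →L[ℝ] (Fin N → ℝ))
    (ζ : Fin N → ℝ) (hcontr : (L : ℝ) * ‖A‖ < 1) :
    ∀ z : ℤ → (Fin d → ℝ), ∃! r : ℤ → (Fin N → ℝ),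
      (∃ C, ∀ t, ‖r t‖ ≤ C) ∧
      ∀ t : ℤ, r t = fun i => σ ((A (r (t - 1)) + Win (z t) + ζ) i) := by
  intro z
  obtain ⟨M, hM⟩ := hσbdd
  set M' : ℝ := max M 0 with hM'def
  have hM'0 : 0 ≤ M' := le_max_right _ _
  have hM' : ∀ x, |σ x| ≤ M' := fun x => (hM x).trans (le_max_left _ _)
  set g : (ℤ → (Fin N → ℝ)) → ℤ → (Fin N → ℝ) :=
    fun r t => fun i => σ ((A (r (t - 1)) + Win (z t) + ζ) i) with hg
  have hgbdd : ∀ r t, ‖g r t‖ ≤ M' := by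
    intro r t
    rw [pi_norm_le_iff_of_nonneg hM'0]
    intro i
    exact hM' _
  -- the contraction map on bounded continuous functions
  set Φ : BoundedContinuousFunction ℤ (Fin N → ℝ) → BoundedContinuousFunction ℤ (Fin N → ℝ) :=
    fun f => BoundedContinuousFunction.ofNormedAddCommGroup (g f)
      continuous_of_discreteTopology M' (hgbdd f) with hΦdef
  -- pointwise Lipschitz estimate
  have hlip : ∀ (f h : BoundedContinuousFunction ℤ (Fin N → ℝ)) (t : ℤ),
      ‖g (⇑f) t - g (⇑h) t‖ ≤ (L : ℝ) * ‖A‖ * ‖f (t - 1) - h (t - 1)‖ := by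
    intro f h t
    have h1 : ∀ i, |g (⇑f) t i - g (⇑h) t i| ≤
        (L : ℝ) * ‖A (f (t - 1)) - A (h (t - 1))‖ := by
      intro i
      have hd := hσ.dist_le_mul ((A (f (t - 1)) + Win (z t) + ζ) i)
        ((A (h (t - 1)) + Win (z t) + ζ) i)
      rw [Real.dist_eq, Real.dist_eq] at hd
      have e : (A (f (t - 1)) + Win (z t) + ζ) i - (A (h (t - 1)) + Win (z t) + ζ) i
          = (A (f (t - 1)) - A (h (t - 1))) i := by
        simp [Pi.add_apply, Pi.sub_apply]
      rw [e] at hd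
      refine hd.trans (mul_le_mul_of_nonneg_left ?_ L.coe_nonneg)
      exact norm_le_pi_norm (A (f (t - 1)) - A (h (t - 1))) i
    have h2 : ‖g (⇑f) t - g (⇑h) t‖ ≤ (L : ℝ) * ‖A (f (t - 1)) - A (h (t - 1))‖ := by
      rw [pi_norm_le_iff_of_nonneg (by positivity)]
      intro i
      exact h1 i
    have h3 : ‖A (f (t - 1)) - A (h (t - 1))‖ ≤ ‖A‖ * ‖f (t - 1) - h (t - 1)‖ := by
      have e : A (f (t - 1)) - A (h (t - 1)) = A (f (t - 1) - h (t - 1)) :=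
        (A.map_sub _ _).symm
      rw [e]
      exact A.le_opNorm _
    calc ‖g (⇑f) t - g (⇑h) t‖ ≤ (L : ℝ) * ‖A (f (t - 1)) - A (h (t - 1))‖ := h2
      _ ≤ (L : ℝ) * (‖A‖ * ‖f (t - 1) - h (t - 1)‖) :=
          mul_le_mul_of_nonneg_left h3 L.coe_nonneg
      _ = (L : ℝ) * ‖A‖ * ‖f (t - 1) - h (t - 1)‖ := by ring
  set K : NNReal := L * ‖A‖₊ with hK
  have hKcoe : (K : ℝ) = (L : ℝ) * ‖A‖ := by simp [hK]
  have hK1 : K < 1 := by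
    rw [← NNReal.coe_lt_coe, hKcoe]; simpa using hcontr
  have hΦlip : LipschitzWith K Φ := by
    rw [lipschitzWith_iff_dist_le_mul]
    intro f h
    rw [BoundedContinuousFunction.dist_le (by positivity)]
    intro t
    rw [dist_eq_norm]
    calc ‖Φ f t - Φ h t‖ = ‖g (⇑f) t - g (⇑h) t‖ := rfl
      _ ≤ (L : ℝ) * ‖A‖ * ‖f (t - 1) - h (t - 1)‖ := hlip f h t
      _ ≤ (L : ℝ) * ‖A‖ * dist f h := by
          refine mul_le_mul_of_nonneg_left ?_ (by positivity)
          rw [← dist_eq_norm]; exact BoundedContinuousFunction.dist_coe_le_dist _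
      _ = (K : ℝ) * dist f h := by rw [hKcoe]
  have hΦcontr : ContractingWith K Φ := ⟨hK1, hΦlip⟩
  set r₀ := hΦcontr.fixedPoint Φ with hr₀
  have hfix : Φ r₀ = r₀ := hΦcontr.fixedPoint_isFixedPt
  refine ⟨⇑r₀, ⟨⟨‖r₀‖, fun t => r₀.norm_coe_le_norm t⟩, ?_⟩, ?_⟩
  · intro t
    have h1 : Φ r₀ t = r₀ t := by rw [hfix]
    exact h1.symm
  · rintro r' ⟨⟨C, hC⟩, hrec⟩
    set r'b : BoundedContinuousFunction ℤ (Fin N → ℝ) :=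
      BoundedContinuousFunction.ofNormedAddCommGroup r' continuous_of_discreteTopology C hC
      with hr'b
    have hfix' : Function.IsFixedPt Φ r'b := by
      apply BoundedContinuousFunction.ext
      intro t
      show g (⇑r'b) t = r'b t
      have e : (⇑r'b : ℤ → Fin N → ℝ) = r' := rfl
      rw [e]
      exact (hrec t).symm
    have h4 : r'b = r₀ := hΦcontr.fixedPoint_unique hfix'
    have : (⇑r'b : ℤ → Fin N → ℝ) = ⇑r₀ :=
      congrArg (fun f : BoundedContinuousFunction ℤ (Fin N → ℝ) => ⇑f) h4
    exact this
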